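/- For every N ≥ 2 there exist an optimum tree T*_N on N vertices and an optimum tree T*_{N−1} on N−1 vertices such that T*_{N−1} is an induced subgraph of T*_N. Equivalently, removing a suitable leaf from an optimum tree on N vertices yields an optimum tree on N−1 vertices. -/

import Mathlib

/-- `nstar G h` is the maximum number of vertices of `G` that are pairwise at
graph distance at least `h`. -/
noncomputable def nstar {V : Type*} (G : SimpleGraph V) (h : ℕ) : ℕ :=
  sSup {k | ∃ S : Finset V, S.card = k ∧ ∀ i ∈ S, ∀ j ∈ S, i ≠ j → h ≤ G.dist i j}

/-!
Deleting a leaf of a graph changes no distance between the remaining vertices, so it lowers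
`n*_h` by at most one, and attaching a leaf does not lower it. Let `T` and `T'` be optimum trees
on `N` and `N - 1` vertices. If `n*_h(T) ≤ n*_h(T')`, attaching a leaf to `T'` gives a tree on `N`
vertices at least as good as `T`, hence optimum. Otherwise `n*_h(T') < n*_h(T)`, and deleting a
leaf of `T` gives a tree on `N - 1` vertices at least as good as `T'`, hence optimum.
-/

namespace SimpleGraph

variable {V V' : Type*} {G : SimpleGraph V} {G' : SimpleGraph V'}

lemma Hom.edist_le (f : G' →g G) (a b : V') : G.edist (f a) (f b) ≤ G'.edist a b :=
  le_iInf fun p => (p.map f).edist_le.trans_eq (by rw [Walk.length_map])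

lemma edist_induce_of_subsingleton_neighborSet {s : Set V}
    (hs : ∀ x ∉ s, (G.neighborSet x).Subsingleton) (a b : s) :
    (G.induce s).edist a b = G.edist a b := by
  classical
  refine le_antisymm (le_iInf fun p => ?_) ((Embedding.induce s).toHom.edist_le a b)
  have hsupp : ∀ x ∈ p.bypass.support, x ∈ s := fun x hx => by
    by_contra hxs
    exact p.bypass_isPath.isTrail.not_mem_support_of_subsingleton_neighborSet
      (by rintro rfl; exact hxs a.2) (by rintro rfl; exact hxs b.2) (hs x hxs) hx
  calc (G.induce s).edist a b ≤ (p.bypass.induce s hsupp).length := edist_le _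
    _ = p.bypass.length := by
      rw [← Walk.length_map (Embedding.induce s).toHom, Walk.map_induce]
      rfl
    _ ≤ p.length := by exact_mod_cast p.length_bypass_le_length

lemma Embedding.edist_eq_of_subsingleton_neighborSet (φ : G' ↪g G)
    (hs : ∀ x ∉ Set.range φ, (G.neighborSet x).Subsingleton) (a b : V') :
    G.edist (φ a) (φ b) = G'.edist a b := by
  refine le_antisymm (φ.toHom.edist_le a b) ?_
  calc G'.edist a b
      ≤ (G.induce (Set.range φ)).edist (φ.isoInduceRange a) (φ.isoInduceRange b) := by
        simpa using φ.isoInduceRange.symm.toHom.edist_le (φ.isoInduceRange a) (φ.isoInduceRange b)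
    _ = G.edist (φ a) (φ b) := edist_induce_of_subsingleton_neighborSet hs _ _

lemma Embedding.dist_eq_of_subsingleton_neighborSet (φ : G' ↪g G)
    (hs : ∀ x ∉ Set.range φ, (G.neighborSet x).Subsingleton) (a b : V') :
    G.dist (φ a) (φ b) = G'.dist a b := by
  rw [dist, dist, φ.edist_eq_of_subsingleton_neighborSet hs]

section nstar

variable {h : ℕ}

def IsScattered (G : SimpleGraph V) (h : ℕ) (S : Finset V) : Prop :=
  ∀ i ∈ S, ∀ j ∈ S, i ≠ j → h ≤ G.dist i j

lemma bddAbove_card_isScattered [Finite V] :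
    BddAbove {k | ∃ S : Finset V, S.card = k ∧ G.IsScattered h S} := by
  cases nonempty_fintype V
  exact ⟨Fintype.card V, by rintro _ ⟨S, rfl, -⟩; exact S.card_le_univ⟩

lemma IsScattered.card_le_nstar [Finite V] {S : Finset V} (hS : G.IsScattered h S) :
    S.card ≤ nstar G h :=
  le_csSup bddAbove_card_isScattered ⟨S, rfl, hS⟩

lemma exists_isScattered_card_eq_nstar [Finite V] (G : SimpleGraph V) (h : ℕ) :
    ∃ S : Finset V, G.IsScattered h S ∧ S.card = nstar G h := by
  obtain ⟨S, hcard, hS⟩ :=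
    Nat.sSup_mem (s := {k | ∃ S : Finset V, S.card = k ∧ G.IsScattered h S})
      ⟨0, ∅, rfl, by simp [IsScattered]⟩ bddAbove_card_isScattered
  exact ⟨S, hS, hcard⟩

lemma nstar_le_nstar_of_injective [Finite V] (f : V' → V) (hf : f.Injective)
    (hdist : ∀ a b, G'.dist a b ≤ G.dist (f a) (f b)) : nstar G' h ≤ nstar G h := by
  have : Finite V' := Finite.of_injective f hf
  classical
  obtain ⟨S, hS, hcard⟩ := exists_isScattered_card_eq_nstar G' h
  have hscat : G.IsScattered h (S.image f) := by
    simp only [IsScattered, Finset.forall_mem_image]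
    exact fun a ha b hb hab => (hS a ha b hb (hab <| congrArg f ·)).trans (hdist a b)
  rw [← hcard, ← Finset.card_image_of_injective S hf]
  exact hscat.card_le_nstar

lemma nstar_le_nstar_add_one_of_injective [Finite V] (f : V' → V) (hf : f.Injective) (v : V)
    (hv : ∀ x ≠ v, x ∈ Set.range f) (hdist : ∀ a b, G.dist (f a) (f b) ≤ G'.dist a b) :
    nstar G h ≤ nstar G' h + 1 := by
  have : Finite V' := Finite.of_injective f hf
  classical
  obtain ⟨S, hS, hcard⟩ := exists_isScattered_card_eq_nstar G h
  set S' := S.preimage f hf.injOn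
  have hscat : G'.IsScattered h S' := fun a ha b hb hab =>
    (hS _ (Finset.mem_preimage.1 ha) _ (Finset.mem_preimage.1 hb) (hf.ne hab)).trans (hdist a b)
  have hsub : S.erase v ⊆ S'.image f := fun x hx => by
    obtain ⟨a, rfl⟩ := hv x (Finset.ne_of_mem_erase hx)
    exact Finset.mem_image_of_mem f (Finset.mem_preimage.2 (Finset.mem_of_mem_erase hx))
  calc nstar G h = S.card := hcard.symm
    _ ≤ (S.erase v).card + 1 := Nat.sub_le_iff_le_add.1 Finset.pred_card_le_card_erase
    _ ≤ S'.card + 1 := by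
      gcongr
      exact (Finset.card_le_card hsub).trans Finset.card_image_le
    _ ≤ nstar G' h + 1 := by gcongr; exact hscat.card_le_nstar

end nstar

/-- `φ` exhibits `G` as `G'` with one extra vertex `v` of degree at most one. -/
structure Embedding.IsLeafExtension (φ : G' ↪g G) (v : V) : Prop where
  range_eq : Set.range φ = {v}ᶜ
  subsingleton_neighborSet : (G.neighborSet v).Subsingleton

namespace Embedding.IsLeafExtension

variable {φ : G' ↪g G} {v : V} (hφ : φ.IsLeafExtension v)
include hφ

lemma dist_eq (a b : V') : G.dist (φ a) (φ b) = G'.dist a b :=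
  φ.dist_eq_of_subsingleton_neighborSet
    (fun x hx => by
      obtain rfl : x = v := by simpa [hφ.range_eq] using hx
      exact hφ.subsingleton_neighborSet) a b

lemma nstar_le [Finite V] {h : ℕ} : nstar G' h ≤ nstar G h :=
  nstar_le_nstar_of_injective φ φ.injective fun a b => (hφ.dist_eq a b).ge

lemma nstar_le_add_one [Finite V] {h : ℕ} : nstar G h ≤ nstar G' h + 1 :=
  nstar_le_nstar_add_one_of_injective φ φ.injective v (by simp [hφ.range_eq])
    fun a b => (hφ.dist_eq a b).le

lemma isAcyclic (hG' : G'.IsAcyclic) : G.IsAcyclic := by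
  classical
  intro x c hc
  by_cases hv : v ∈ c.support
  · -- a cycle through `v` would give `v` two distinct neighbours
    have hc' := hc.rotate hv
    exact hc'.snd_ne_penultimate <| hφ.subsingleton_neighborSet
      ((c.rotate v hv).adj_snd hc'.not_nil) ((c.rotate v hv).adj_penultimate hc'.not_nil).symm
  · have hs : ∀ y ∈ c.support, y ∈ Set.range φ := by
      rw [hφ.range_eq]
      exact fun y hy hyv => hv (hyv ▸ hy)
    refine hG' ((c.induce _ hs).map φ.isoInduceRange.symm.toHom) ?_
    rw [Walk.isCycle_map_iff_of_injective φ.isoInduceRange.symm.injective,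
      ← Walk.isCycle_map_iff_of_injective (f := (Embedding.induce (Set.range φ)).toHom)
        (Embedding.induce (G := G) _).injective,
      Walk.map_induce]
    exact hc

end Embedding.IsLeafExtension

lemma IsTree.exists_deleteLeaf [Fintype V] [Fintype V'] [Nonempty V'] (hG : G.IsTree)
    (hcard : Fintype.card V = Fintype.card V' + 1) :
    ∃ (G' : SimpleGraph V') (φ : G' ↪g G) (v : V), G'.IsTree ∧ φ.IsLeafExtension v := by
  classical
  have : Nontrivial V := Fintype.one_lt_card_iff_nontrivial.1 (by
    have := Fintype.card_pos (α := V'); omega)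
  obtain ⟨v, hv⟩ := hG.exists_vert_degree_one_of_nontrivial
  obtain ⟨u, -, hu⟩ := degree_eq_one_iff_existsUnique_adj.1 hv
  have hleaf : ∀ x ∉ ({v}ᶜ : Set V), (G.neighborSet x).Subsingleton := by
    intro x hx y hy z hz
    obtain rfl : x = v := by simpa using hx
    exact (hu y hy).trans (hu z hz).symm
  have : Nonempty ({v}ᶜ : Set V) := by
    obtain ⟨w, hw⟩ := exists_ne v
    exact ⟨⟨w, hw⟩⟩
  have hind : (G.induce {v}ᶜ).IsTree :=
    ⟨⟨hG.connected.preconnected.induce_of_degree_eq_one hleaf⟩, hG.isAcyclic.induce _⟩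
  let e : V' ≃ ({v}ᶜ : Set V) := Fintype.equivOfCardEq (by
    rw [Fintype.card_compl_set]; simp; omega)
  refine ⟨(G.induce {v}ᶜ).comap e, (Embedding.induce _).comp (Iso.comap e _).toEmbedding, v,
    (Iso.comap e _).isTree_iff.2 hind, ⟨?_, hleaf v (by simp)⟩⟩
  ext x
  refine ⟨?_, fun hx => ⟨e.symm ⟨x, hx⟩, ?_⟩⟩
  · rintro ⟨y, rfl⟩
    exact (e y).2
  · show ((e (e.symm ⟨x, hx⟩) : ({v}ᶜ : Set V)) : V) = x
    simp

lemma IsTree.exists_addLeaf [Fintype V] [Fintype V'] (hG' : G'.IsTree)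
    (hcard : Fintype.card V = Fintype.card V' + 1) :
    ∃ (G : SimpleGraph V) (φ : G' ↪g G) (v : V), G.IsTree ∧ φ.IsLeafExtension v := by
  classical
  obtain ⟨u⟩ := hG'.connected.nonempty
  let e : Option V' ≃ V := Fintype.equivOfCardEq (by rw [Fintype.card_option, hcard])
  let f : V' ↪ V := Function.Embedding.some.trans e.toEmbedding
  let v := e none
  have hfv (a : V') : f a ≠ v := fun h => Option.some_ne_none a (e.injective h)
  let G := G'.map f ⊔ edge v (f u)
  have hadj (a b : V') : G.Adj (f a) (f b) ↔ G'.Adj a b := by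
    simp [G, edge_adj, hfv]
  have hadj_v (y : V) : G.Adj v y ↔ y = f u := by
    have := hfv u
    simp only [G, sup_adj, map_adj, edge_adj]
    grind
  let φ : G' ↪g G := ⟨f, hadj _ _⟩
  have hrange : Set.range φ = {v}ᶜ := by
    ext x
    refine ⟨by rintro ⟨a, rfl⟩; exact hfv a, fun hx => ?_⟩
    obtain ⟨a, ha⟩ := Option.ne_none_iff_exists'.1 fun h => hx (e.symm_apply_eq.1 h)
    exact ⟨a, by rw [← e.apply_symm_apply x, ha]; rfl⟩
  have hφ : φ.IsLeafExtension v :=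
    ⟨hrange, fun y hy z hz => ((hadj_v y).1 hy).trans ((hadj_v z).1 hz).symm⟩
  refine ⟨G, φ, v, ⟨?_, hφ.isAcyclic hG'.isAcyclic⟩, hφ⟩
  refine (connected_iff_exists_forall_reachable G).2 ⟨f u, fun x => ?_⟩
  by_cases hx : x = v
  · exact hx ▸ ((hadj_v _).2 rfl).symm.reachable
  · obtain ⟨a, rfl⟩ : x ∈ Set.range φ := hrange ▸ hx
    exact (hG'.connected u a).map φ.toHom

lemma exists_isTree_forall_nstar_le (V : Type*) [Finite V] [Nonempty V] (h : ℕ) :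
    ∃ T : SimpleGraph V, T.IsTree ∧ ∀ U : SimpleGraph V, U.IsTree → nstar U h ≤ nstar T h := by
  obtain ⟨T₀, -, hT₀⟩ := (connected_top (V := V)).exists_isTree_le
  exact Set.exists_max_image {T : SimpleGraph V | T.IsTree} (nstar · h) (Set.toFinite _) ⟨T₀, hT₀⟩

end SimpleGraph

/-- For every `N ≥ 2` there exist an optimum tree on `N` vertices and an optimum
tree on `N - 1` vertices such that the latter is an induced subgraph of the former. -/
theorem optimum_tree_induced_subgraph (N h : ℕ) (hN : 2 ≤ N) :
    ∃ (T : SimpleGraph (Fin N)) (T' : SimpleGraph (Fin (N - 1))),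
      T.IsTree ∧ T'.IsTree ∧
      (∀ U : SimpleGraph (Fin N), U.IsTree → nstar U h ≤ nstar T h) ∧
      (∀ U : SimpleGraph (Fin (N - 1)), U.IsTree → nstar U h ≤ nstar T' h) ∧
      ∃ f : Fin (N - 1) → Fin N, Function.Injective f ∧
        ∀ a b, T'.Adj a b ↔ T.Adj (f a) (f b) := by
  have : NeZero N := ⟨by omega⟩
  have : NeZero (N - 1) := ⟨by omega⟩
  have hcard : Fintype.card (Fin N) = Fintype.card (Fin (N - 1)) + 1 := by simp; omega
  obtain ⟨T, hT, hT_opt⟩ := SimpleGraph.exists_isTree_forall_nstar_le (Fin N) h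
  obtain ⟨T', hT', hT'_opt⟩ := SimpleGraph.exists_isTree_forall_nstar_le (Fin (N - 1)) h
  by_cases hle : nstar T h ≤ nstar T' h
  · obtain ⟨T₁, φ, _, hT₁, hφ⟩ := hT'.exists_addLeaf hcard
    exact ⟨T₁, T', hT₁, hT', fun U hU => (hT_opt U hU).trans (hle.trans hφ.nstar_le), hT'_opt,
      φ, φ.injective, fun a b => φ.map_adj_iff.symm⟩
  · obtain ⟨T₂, φ, _, hT₂, hφ⟩ := hT.exists_deleteLeaf hcard
    refine ⟨T, T₂, hT, hT₂, hT_opt, fun U hU => ?_, φ, φ.injective, fun a b => φ.map_adj_iff.symm⟩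
    have := hφ.nstar_le_add_one (h := h)
    have := hT'_opt U hU
    omega
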